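/- Let G be a finite undirected simple graph in which every vertex has positive degree, let S ⊆ V be nonempty, and let M := (D⁻¹A + I)/2. For every subset X ⊆ S with μ(X) ≥ μ(S)/2 and every integer t ≥ 0, π_X' (I_S M I_S)^t 1_X ≥ (1/200)·(1 − 3φ(S)/2)^t. (That is, the lazy random walk started at a vertex of X chosen with probability proportional to degree remains inside S and ends in X, never leaving S during the first t steps, with probability at least (1/200)(1 − 3φ(S)/2)^t.) -/

import Mathlib

open Matrix Finset

variable {V : Type*} [Fintype V] [DecidableEq V]

/-- Volume of a set of vertices: sum of degrees. -/
noncomputable def vol (G : SimpleGraph V) [DecidableRel G.Adj] (S : Finset V) : ℝ :=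
  ∑ v ∈ S, (G.degree v : ℝ)

/-- Number of edges leaving `S`. -/
noncomputable def cut (G : SimpleGraph V) [DecidableRel G.Adj] (S : Finset V) : ℝ :=
  ∑ u ∈ S, ∑ v ∈ Sᶜ, if G.Adj u v then (1 : ℝ) else 0

/-- Conductance of `S`. -/
noncomputable def conduct (G : SimpleGraph V) [DecidableRel G.Adj] (S : Finset V) : ℝ :=
  cut G S / vol G S

/-- Lazy random walk matrix `M = (D⁻¹ A + I)/2`. -/
noncomputable def lazy (G : SimpleGraph V) [DecidableRel G.Adj] : Matrix V V ℝ :=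
  (2 : ℝ)⁻¹ • (Matrix.diagonal (fun v => ((G.degree v : ℝ))⁻¹) * G.adjMatrix ℝ + 1)

/-- Diagonal 0/1 indicator matrix of `S`. -/
def indMat (S : Finset V) : Matrix V V ℝ :=
  Matrix.diagonal (fun v => if v ∈ S then (1 : ℝ) else 0)

/-- Indicator column vector of `S`. -/
def indVec (S : Finset V) : V → ℝ := fun v => if v ∈ S then (1 : ℝ) else 0

/-- The distribution `π_S` proportional to degrees on `S`. -/
noncomputable def piVec (G : SimpleGraph V) [DecidableRel G.Adj] (S : Finset V) : V → ℝ :=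
  fun v => if v ∈ S then (G.degree v : ℝ) / vol G S else 0

/-!
Conjugating by `D^{1/2}` turns `I_S M I_S` into the symmetric matrix
`B = I_S (I + D^{-1/2} A D^{-1/2}) I_S / 2`, whose eigenvalues lie in `[0, 1]`, and the walk
probability into `⟨y_X, B^t y_X⟩ / μ(X)` with `y_X = D^{1/2} 1_X`. Expand `y_S = y_X + y_{S∖X}` in an
eigenbasis of `B`. Since `⟨y_S, (I - B) y_S⟩ = ∂(S)/2`, at most a third of `‖y_S‖² = μ(S)` sits on
eigenvalues below `θ = 1 - 3φ(S)/2`; as `‖y_{S∖X}‖² ≤ μ(S)/2`, the vector `y_X` keeps mass at least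
`μ(S)/90` on the eigenvalues `≥ θ`, which yields `θ^t μ(S)/90`. When `φ(S) ≥ 1/3` we have `|θ| ≤ 1/2`,
and Jensen's inequality with `⟨y_X, B y_X⟩ ≥ μ(X)/2` already gives `2^{-t}`.
-/

section Spectral

variable {ι : Type*} [Fintype ι] [DecidableEq ι] {B : Matrix ι ι ℝ}

theorem Matrix.IsHermitian.pow_mulVec_eigenvectorBasis (hB : B.IsHermitian) (t : ℕ) (i : ι) :
    B ^ t *ᵥ ⇑(hB.eigenvectorBasis i) = hB.eigenvalues i ^ t • ⇑(hB.eigenvectorBasis i) := by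
  induction t with
  | zero => simp
  | succ t ih =>
    rw [pow_succ', ← mulVec_mulVec, ih, mulVec_smul, hB.mulVec_eigenvectorBasis, smul_smul,
      pow_succ]

theorem Matrix.IsHermitian.dotProduct_pow_mulVec (hB : B.IsHermitian) (t : ℕ) (y : ι → ℝ) :
    y ⬝ᵥ (B ^ t *ᵥ y) = ∑ i, hB.eigenvalues i ^ t * (⇑(hB.eigenvectorBasis i) ⬝ᵥ y) ^ 2 := by
  have hy : y = ∑ i, (⇑(hB.eigenvectorBasis i) ⬝ᵥ y) • ⇑(hB.eigenvectorBasis i) := by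
    have := congrArg WithLp.ofLp (hB.eigenvectorBasis.sum_repr' (WithLp.toLp 2 y))
    simpa [EuclideanSpace.inner_eq_star_dotProduct, dotProduct_comm] using this.symm
  nth_rw 2 [hy]
  simp only [mulVec_sum, mulVec_smul, hB.pow_mulVec_eigenvectorBasis, dotProduct_sum,
    dotProduct_smul, smul_eq_mul]
  refine Finset.sum_congr rfl fun i _ => ?_
  rw [dotProduct_comm y]
  ring

theorem Matrix.IsHermitian.sum_sq_eigenvectorBasis_dotProduct (hB : B.IsHermitian) (y : ι → ℝ) :
    ∑ i, (⇑(hB.eigenvectorBasis i) ⬝ᵥ y) ^ 2 = y ⬝ᵥ y := by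
  simpa using (hB.dotProduct_pow_mulVec 0 y).symm

theorem Matrix.IsHermitian.sum_eigenvalues_mul_sq_eigenvectorBasis_dotProduct
    (hB : B.IsHermitian) (y : ι → ℝ) :
    ∑ i, hB.eigenvalues i * (⇑(hB.eigenvectorBasis i) ⬝ᵥ y) ^ 2 = y ⬝ᵥ B *ᵥ y := by
  simpa using (hB.dotProduct_pow_mulVec 1 y).symm

theorem Matrix.IsHermitian.eigenvalues_mem_Icc (hB : B.IsHermitian)
    (h : ∀ x, x ⬝ᵥ B *ᵥ x ∈ Set.Icc 0 (x ⬝ᵥ x)) (i : ι) : hB.eigenvalues i ∈ Set.Icc 0 1 := by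
  have hnorm : ⇑(hB.eigenvectorBasis i) ⬝ᵥ ⇑(hB.eigenvectorBasis i) = 1 := by
    have h := real_inner_self_eq_norm_sq (hB.eigenvectorBasis i)
    rw [hB.eigenvectorBasis.orthonormal.1 i, EuclideanSpace.inner_eq_star_dotProduct] at h
    simpa using h
  simpa [hB.mulVec_eigenvectorBasis, hnorm] using h (hB.eigenvectorBasis i)

end Spectral

section WeightedSums

variable {ι : Type*}

theorem sum_filter_lt_one_sub_le [Fintype ι] {w ev : ι → ℝ} {δ m : ℝ} (hw : ∀ i, 0 ≤ w i)
    (hev : ∀ i, ev i ≤ 1) (hδ : 0 ≤ δ) (hm : 0 ≤ m) (h : ∑ i, w i * (1 - ev i) ≤ δ * m) :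
    ∑ i with ev i < 1 - δ, w i ≤ m := by
  have hterm : ∀ i, 0 ≤ w i * (1 - ev i) := fun i => mul_nonneg (hw i) (by linarith [hev i])
  have hfilter : δ * ∑ i with ev i < 1 - δ, w i ≤ ∑ i, w i * (1 - ev i) := calc
    δ * ∑ i with ev i < 1 - δ, w i ≤ ∑ i with ev i < 1 - δ, w i * (1 - ev i) := by
      rw [Finset.mul_sum]
      refine Finset.sum_le_sum fun i hi => ?_
      rw [mul_comm]
      exact mul_le_mul_of_nonneg_left (by linarith [(Finset.mem_filter.1 hi).2]) (hw i)
    _ ≤ ∑ i, w i * (1 - ev i) :=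
      Finset.sum_le_sum_of_subset_of_nonneg (Finset.filter_subset _ _) fun i _ _ => hterm i
  rcases hδ.lt_or_eq with hδ | rfl
  · exact le_of_mul_le_mul_left (by linarith) hδ
  · refine (Finset.sum_eq_zero fun i hi => ?_).le.trans hm
    have hzero := (Finset.sum_eq_zero_iff_of_nonneg fun i _ => hterm i).1
      (le_antisymm (by linarith) (Finset.sum_nonneg fun i _ => hterm i)) i (Finset.mem_univ i)
    have hpos : 0 < 1 - ev i := by linarith [(Finset.mem_filter.1 hi).2]
    exact (mul_eq_zero.1 hzero).resolve_right hpos.ne'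

theorem pow_div_le_sum_pow_mul_sq_div [Fintype ι] {ev c : ι → ℝ} (hev : ∀ i, 0 ≤ ev i)
    (hc : 0 < ∑ i, c i ^ 2) (t : ℕ) :
    ((∑ i, ev i * c i ^ 2) / ∑ i, c i ^ 2) ^ t ≤ (∑ i, ev i ^ t * c i ^ 2) / ∑ i, c i ^ 2 := by
  have h := Real.pow_arith_mean_le_arith_mean_pow Finset.univ (fun i => c i ^ 2 / ∑ j, c j ^ 2) ev
    (fun i _ => by positivity) (by rw [← Finset.sum_div, div_self hc.ne']) (fun i _ => hev i) t
  convert h using 2 <;> rw [Finset.sum_div] <;> exact Finset.sum_congr rfl fun i _ => by ring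

theorem div_le_sum_sq_of_le_sum_add_sq {c b : ι → ℝ} (s : Finset ι) {V : ℝ}
    (ha : 2 / 3 * V ≤ ∑ i ∈ s, (c i + b i) ^ 2) (hb : ∑ i ∈ s, b i ^ 2 ≤ V / 2) :
    V / 90 ≤ ∑ i ∈ s, c i ^ 2 := by
  have hyoung : ∑ i ∈ s, (c i + b i) ^ 2 ≤ ∑ i ∈ s, (6 * c i ^ 2 + 6 / 5 * b i ^ 2) :=
    Finset.sum_le_sum fun i _ => by nlinarith [sq_nonneg (5 * c i - b i)]
  rw [Finset.sum_add_distrib, ← Finset.mul_sum, ← Finset.mul_sum] at hyoung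
  linarith

theorem pow_mul_le_sum_pow_mul_sq [Fintype ι] {ev c b : ι → ℝ} {V φ : ℝ}
    (hev : ∀ i, ev i ∈ Set.Icc 0 1) (hφ : φ ∈ Set.Ico 0 (1 / 3))
    (ha : ∑ i, (c i + b i) ^ 2 = V) (haev : ∑ i, ev i * (c i + b i) ^ 2 = V - φ * V / 2)
    (hb : ∑ i, b i ^ 2 ≤ V / 2) (t : ℕ) :
    (1 - 3 * φ / 2) ^ t * (V / 90) ≤ ∑ i, ev i ^ t * c i ^ 2 := by
  have hθ : 0 ≤ 1 - 3 * φ / 2 := by linarith [hφ.2]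
  set θ := 1 - 3 * φ / 2
  have hV : 0 ≤ V := ha ▸ Finset.sum_nonneg fun i _ => sq_nonneg _
  have hlow : ∑ i with ev i < θ, (c i + b i) ^ 2 ≤ V / 3 := by
    refine sum_filter_lt_one_sub_le (fun i => sq_nonneg _) (fun i => (hev i).2) (by linarith [hφ.1])
      (by linarith) ?_
    simp only [mul_sub, mul_one, Finset.sum_sub_distrib, ha, mul_comm _ (ev _), haev]
    linarith
  have hhigh : 2 / 3 * V ≤ ∑ i with θ ≤ ev i, (c i + b i) ^ 2 := by
    have hsplit := Finset.sum_filter_add_sum_filter_not Finset.univ (fun i => θ ≤ ev i)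
      fun i => (c i + b i) ^ 2
    simp only [not_le] at hsplit
    linarith
  have hbhigh : ∑ i with θ ≤ ev i, b i ^ 2 ≤ V / 2 :=
    le_trans (Finset.sum_le_sum_of_subset_of_nonneg (Finset.filter_subset _ _)
      fun i _ _ => sq_nonneg _) hb
  calc θ ^ t * (V / 90) ≤ θ ^ t * ∑ i with θ ≤ ev i, c i ^ 2 :=
        mul_le_mul_of_nonneg_left (div_le_sum_sq_of_le_sum_add_sq _ hhigh hbhigh) (pow_nonneg hθ t)
    _ ≤ ∑ i with θ ≤ ev i, ev i ^ t * c i ^ 2 := by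
        rw [Finset.mul_sum]
        exact Finset.sum_le_sum fun i hi => mul_le_mul_of_nonneg_right
          (pow_le_pow_left₀ hθ (Finset.mem_filter.1 hi).2 t) (sq_nonneg _)
    _ ≤ ∑ i, ev i ^ t * c i ^ 2 :=
        Finset.sum_le_sum_of_subset_of_nonneg (Finset.filter_subset _ _)
          fun i _ _ => mul_nonneg (pow_nonneg (hev i).1 t) (sq_nonneg _)

theorem one_div_200_mul_pow_le [Fintype ι] {ev c b : ι → ℝ} {vX vS φ : ℝ}
    (hev : ∀ i, ev i ∈ Set.Icc 0 1) (hφ : φ ∈ Set.Icc 0 1) (hc : ∑ i, c i ^ 2 = vX)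
    (hvX : 0 < vX) (hvXS : vX ≤ vS) (hcev : vX / 2 ≤ ∑ i, ev i * c i ^ 2)
    (ha : ∑ i, (c i + b i) ^ 2 = vS) (haev : ∑ i, ev i * (c i + b i) ^ 2 = vS - φ * vS / 2)
    (hb : ∑ i, b i ^ 2 ≤ vS / 2) (t : ℕ) :
    1 / 200 * (1 - 3 * φ / 2) ^ t ≤ vX⁻¹ * ∑ i, ev i ^ t * c i ^ 2 := by
  rcases lt_or_ge φ (1 / 3) with hφ3 | hφ3
  · have hθ : 0 ≤ (1 - 3 * φ / 2) ^ t := pow_nonneg (by linarith) t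
    rw [le_inv_mul_iff₀ hvX]
    calc vX * (1 / 200 * (1 - 3 * φ / 2) ^ t) ≤ (1 - 3 * φ / 2) ^ t * (vS / 90) := by nlinarith
      _ ≤ ∑ i, ev i ^ t * c i ^ 2 := pow_mul_le_sum_pow_mul_sq hev ⟨hφ.1, hφ3⟩ ha haev hb t
  · have hjensen := pow_div_le_sum_pow_mul_sq_div (fun i => (hev i).1) (hc ▸ hvX) t
    rw [hc] at hjensen
    have hhalf : (1 / 2 : ℝ) ^ t ≤ ((∑ i, ev i * c i ^ 2) / vX) ^ t :=
      pow_le_pow_left₀ (by norm_num) (by rw [le_div_iff₀ hvX]; linarith) t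
    have hθ : (1 - 3 * φ / 2) ^ t ≤ (1 / 2) ^ t := calc
      (1 - 3 * φ / 2) ^ t ≤ |1 - 3 * φ / 2| ^ t := (le_abs_self _).trans (abs_pow _ _).le
      _ ≤ (1 / 2) ^ t :=
        pow_le_pow_left₀ (abs_nonneg _) (abs_le.2 ⟨by linarith [hφ.2], by linarith⟩) t
    rw [inv_mul_eq_div]
    nlinarith [pow_nonneg (by norm_num : (0 : ℝ) ≤ 1 / 2) t]

end WeightedSums

section Graph

variable (G : SimpleGraph V) [DecidableRel G.Adj]

omit [DecidableEq V] in
theorem sum_sum_ite_adj_left (f : V → ℝ) :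
    ∑ u, ∑ v, (if G.Adj u v then f u else 0) = ∑ u, G.degree u * f u := by
  refine Finset.sum_congr rfl fun u _ => ?_
  rw [G.degree_eq_sum_if_adj (R := ℝ), Finset.sum_mul]
  exact Finset.sum_congr rfl fun v _ => by split_ifs <;> simp

omit [DecidableEq V] in
theorem sum_sum_ite_adj_right (f : V → ℝ) :
    ∑ u, ∑ v, (if G.Adj u v then f v else 0) = ∑ u, G.degree u * f u := by
  rw [Finset.sum_comm, ← sum_sum_ite_adj_left]
  simp only [G.adj_comm]

omit [DecidableEq V] in
theorem abs_dotProduct_adjMatrix_mulVec_le (z : V → ℝ) :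
    |z ⬝ᵥ G.adjMatrix ℝ *ᵥ z| ≤ ∑ v, G.degree v * z v ^ 2 := by
  rw [SimpleGraph.dotProduct_mulVec_adjMatrix]
  calc |∑ u, ∑ v, if G.Adj u v then z u * z v else 0|
      ≤ ∑ u, ∑ v, |if G.Adj u v then z u * z v else 0| :=
        (Finset.abs_sum_le_sum_abs _ _).trans
          (Finset.sum_le_sum fun u _ => Finset.abs_sum_le_sum_abs _ _)
    _ ≤ ∑ u, ∑ v, ((if G.Adj u v then z u ^ 2 else 0) + (if G.Adj u v then z v ^ 2 else 0)) / 2 := by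
        gcongr with u _ v _
        split_ifs
        · exact abs_le.2 ⟨by nlinarith [sq_nonneg (z u + z v)], by nlinarith [sq_nonneg (z u - z v)]⟩
        · simp
    _ = ∑ v, G.degree v * z v ^ 2 := by
        simp only [← Finset.sum_div, Finset.sum_add_distrib, sum_sum_ite_adj_left,
          sum_sum_ite_adj_right]
        ring

theorem cut_nonneg (S : Finset V) : 0 ≤ cut G S :=
  Finset.sum_nonneg fun _ _ => Finset.sum_nonneg fun _ _ => by split_ifs <;> norm_num

theorem cut_le_vol (S : Finset V) : cut G S ≤ vol G S :=
  Finset.sum_le_sum fun u _ => by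
    rw [G.degree_eq_sum_if_adj]
    exact Finset.sum_le_sum_of_subset_of_nonneg (Finset.subset_univ _) fun _ _ _ => by
      split_ifs <;> norm_num

omit [DecidableEq V] in
theorem vol_pos (hdeg : ∀ v, 0 < G.degree v) {S : Finset V} (hS : S.Nonempty) : 0 < vol G S :=
  Finset.sum_pos (fun v _ => by exact_mod_cast hdeg v) hS

omit [DecidableEq V] in
theorem vol_mono {X S : Finset V} (hXS : X ⊆ S) : vol G X ≤ vol G S :=
  Finset.sum_le_sum_of_subset_of_nonneg hXS fun _ _ _ => by positivity

theorem vol_sdiff {X S : Finset V} (hXS : X ⊆ S) : vol G (S \ X) = vol G S - vol G X :=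
  Finset.sum_sdiff_eq_sub hXS

theorem indVec_dotProduct_adjMatrix_mulVec (X : Finset V) :
    indVec X ⬝ᵥ G.adjMatrix ℝ *ᵥ indVec X = vol G X - cut G X := by
  have hrow (u : V) : (G.degree u : ℝ) - ∑ v ∈ Xᶜ, (if G.Adj u v then 1 else 0) =
      ∑ v ∈ X, if G.Adj u v then (1 : ℝ) else 0 := by
    rw [G.degree_eq_sum_if_adj, ← Finset.sum_add_sum_compl X]
    ring
  rw [SimpleGraph.dotProduct_mulVec_adjMatrix, vol, cut, ← Finset.sum_sub_distrib]
  simp only [hrow, indVec]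
  simp [← Finset.sum_filter, Finset.filter_inter]

end Graph

theorem dotProduct_diagonal_mul_mul_diagonal_mulVec {ι R : Type*} [Fintype ι] [DecidableEq ι]
    [CommSemiring R] (d : ι → R) (K : Matrix ι ι R) (x : ι → R) :
    x ⬝ᵥ (diagonal d * K * diagonal d) *ᵥ x = (diagonal d *ᵥ x) ⬝ᵥ K *ᵥ (diagonal d *ᵥ x) := by
  rw [← mulVec_mulVec, ← mulVec_mulVec, dotProduct_mulVec x (diagonal d)]
  congr 1
  ext v
  simp [mulVec_diagonal, vecMul_diagonal, mul_comm]

section LazyWalk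

variable (G : SimpleGraph V) [DecidableRel G.Adj]

noncomputable def sqrtDeg : V → ℝ := fun v => √(G.degree v : ℝ)

noncomputable def symLazy : Matrix V V ℝ :=
  (2 : ℝ)⁻¹ • (1 + diagonal (sqrtDeg G)⁻¹ * G.adjMatrix ℝ * diagonal (sqrtDeg G)⁻¹)

noncomputable def sqrtDegVec (X : Finset V) : V → ℝ := diagonal (sqrtDeg G) *ᵥ indVec X

variable {G}

omit [DecidableEq V] in
theorem sqrtDeg_ne_zero (hdeg : ∀ v, 0 < G.degree v) (v : V) : sqrtDeg G v ≠ 0 :=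
  (Real.sqrt_pos.2 (by exact_mod_cast hdeg v)).ne'

theorem semiconjBy_restrict_lazy (hdeg : ∀ v, 0 < G.degree v) (S : Finset V) :
    SemiconjBy (diagonal (sqrtDeg G)) (indMat S * lazy G * indMat S)
      (indMat S * symLazy G * indMat S) := by
  rw [SemiconjBy]
  ext u v
  simp only [indMat, lazy, symLazy, diagonal_mul, mul_diagonal, Matrix.smul_apply, Matrix.add_apply,
    one_apply, Pi.inv_apply, smul_eq_mul]
  rw [show (G.degree u : ℝ) = sqrtDeg G u ^ 2 from (Real.sq_sqrt (Nat.cast_nonneg _)).symm]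
  rcases eq_or_ne u v with rfl | huv <;> split_ifs <;> field_simp [sqrtDeg_ne_zero hdeg] <;> ring

theorem piVec_dotProduct_pow_mulVec (hdeg : ∀ v, 0 < G.degree v) (S X : Finset V) (t : ℕ) :
    piVec G X ⬝ᵥ (indMat S * lazy G * indMat S) ^ t *ᵥ indVec X =
      (vol G X)⁻¹ * sqrtDegVec G X ⬝ᵥ (indMat S * symLazy G * indMat S) ^ t *ᵥ sqrtDegVec G X := by
  have hpi : piVec G X = (vol G X)⁻¹ • sqrtDegVec G X ᵥ* diagonal (sqrtDeg G) := by
    ext v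
    by_cases hv : v ∈ X <;>
      simp [piVec, sqrtDegVec, sqrtDeg, indVec, hv, mulVec_diagonal, vecMul_diagonal,
        div_eq_inv_mul]
  rw [hpi, smul_dotProduct, smul_eq_mul, ← dotProduct_mulVec, mulVec_mulVec,
    ((semiconjBy_restrict_lazy hdeg S).pow_right t).eq, ← mulVec_mulVec, sqrtDegVec]

theorem isHermitian_restrict_symLazy (S : Finset V) :
    (indMat S * symLazy G * indMat S).IsHermitian := by
  simp [IsHermitian, conjTranspose_eq_transpose_of_trivial, symLazy, indMat, transpose_mul,
    mul_assoc]

theorem sum_degree_mul_inv_sqrtDeg_mulVec_sq (hdeg : ∀ v, 0 < G.degree v) (x : V → ℝ) :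
    ∑ v, G.degree v * (diagonal (sqrtDeg G)⁻¹ *ᵥ x) v ^ 2 = x ⬝ᵥ x := by
  refine Finset.sum_congr rfl fun v _ => ?_
  have hd : (0 : ℝ) < G.degree v := by exact_mod_cast hdeg v
  simp only [mulVec_diagonal, Pi.inv_apply, sqrtDeg, mul_pow, inv_pow, Real.sq_sqrt hd.le]
  field_simp

theorem dotProduct_symLazy_mulVec (x : V → ℝ) :
    x ⬝ᵥ symLazy G *ᵥ x = 2⁻¹ * (x ⬝ᵥ x +
      (diagonal (sqrtDeg G)⁻¹ *ᵥ x) ⬝ᵥ G.adjMatrix ℝ *ᵥ (diagonal (sqrtDeg G)⁻¹ *ᵥ x)) := by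
  rw [symLazy, smul_mulVec, add_mulVec, one_mulVec, dotProduct_smul, dotProduct_add,
    dotProduct_diagonal_mul_mul_diagonal_mulVec, smul_eq_mul]

theorem dotProduct_symLazy_mulVec_mem_Icc (hdeg : ∀ v, 0 < G.degree v) (x : V → ℝ) :
    x ⬝ᵥ symLazy G *ᵥ x ∈ Set.Icc 0 (x ⬝ᵥ x) := by
  have h := abs_dotProduct_adjMatrix_mulVec_le G (diagonal (sqrtDeg G)⁻¹ *ᵥ x)
  rw [sum_degree_mul_inv_sqrtDeg_mulVec_sq hdeg] at h
  rw [dotProduct_symLazy_mulVec]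
  constructor <;> linarith [abs_le.1 h]

theorem dotProduct_indMat_mulVec_self_le (S : Finset V) (x : V → ℝ) :
    (indMat S *ᵥ x) ⬝ᵥ (indMat S *ᵥ x) ≤ x ⬝ᵥ x :=
  Finset.sum_le_sum fun v _ => by
    simp only [indMat, mulVec_diagonal]
    split_ifs <;> simp [mul_self_nonneg]

theorem dotProduct_restrict_symLazy_mulVec_mem_Icc (hdeg : ∀ v, 0 < G.degree v) (S : Finset V)
    (x : V → ℝ) : x ⬝ᵥ (indMat S * symLazy G * indMat S) *ᵥ x ∈ Set.Icc 0 (x ⬝ᵥ x) := by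
  rw [indMat, dotProduct_diagonal_mul_mul_diagonal_mulVec, ← indMat]
  have h := dotProduct_symLazy_mulVec_mem_Icc hdeg (indMat S *ᵥ x)
  exact ⟨h.1, h.2.trans (dotProduct_indMat_mulVec_self_le S x)⟩

theorem sqrtDegVec_dotProduct_self (X : Finset V) : sqrtDegVec G X ⬝ᵥ sqrtDegVec G X = vol G X := by
  simp [sqrtDegVec, sqrtDeg, indVec, vol, dotProduct, mulVec_diagonal, Finset.sum_ite_mem]

theorem sqrtDegVec_add_sqrtDegVec_sdiff {X S : Finset V} (hXS : X ⊆ S) :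
    sqrtDegVec G X + sqrtDegVec G (S \ X) = sqrtDegVec G S := by
  rw [sqrtDegVec, sqrtDegVec, sqrtDegVec, ← mulVec_add]
  congr 1
  ext v
  by_cases hX : v ∈ X
  · simp [indVec, hX, hXS hX]
  · simp [indVec, hX]

theorem dotProduct_restrict_symLazy_sqrtDegVec (hdeg : ∀ v, 0 < G.degree v) {X S : Finset V}
    (hXS : X ⊆ S) :
    sqrtDegVec G X ⬝ᵥ (indMat S * symLazy G * indMat S) *ᵥ sqrtDegVec G X =
      vol G X - cut G X / 2 := by
  have hS : indMat S *ᵥ sqrtDegVec G X = sqrtDegVec G X := by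
    ext v
    by_cases hX : v ∈ X
    · simp [indMat, sqrtDegVec, indVec, mulVec_diagonal, hX, hXS hX]
    · simp [indMat, sqrtDegVec, indVec, mulVec_diagonal, hX]
  have hinv : diagonal (sqrtDeg G)⁻¹ *ᵥ sqrtDegVec G X = indVec X := by
    ext v
    by_cases hX : v ∈ X <;> simp [sqrtDegVec, indVec, mulVec_diagonal, hX, sqrtDeg_ne_zero hdeg]
  rw [indMat, dotProduct_diagonal_mul_mul_diagonal_mulVec, ← indMat, hS, dotProduct_symLazy_mulVec,
    hinv, sqrtDegVec_dotProduct_self, indVec_dotProduct_adjMatrix_mulVec]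
  ring

end LazyWalk

theorem stmt2 (G : SimpleGraph V) [DecidableRel G.Adj]
    (hdeg : ∀ v : V, 0 < G.degree v) (S : Finset V) (hS : S.Nonempty)
    (X : Finset V) (hXS : X ⊆ S) (hXvol : vol G S / 2 ≤ vol G X) (t : ℕ) :
    piVec G X ⬝ᵥ ((indMat S * lazy G * indMat S) ^ t).mulVec (indVec X) ≥
      (1 / 200) * (1 - 3 * conduct G S / 2) ^ t := by
  have hB := isHermitian_restrict_symLazy (G := G) S
  have hSpos := vol_pos G hdeg hS
  rw [ge_iff_le, piVec_dotProduct_pow_mulVec hdeg, hB.dotProduct_pow_mulVec]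
  refine one_div_200_mul_pow_le (b := fun i => ⇑(hB.eigenvectorBasis i) ⬝ᵥ sqrtDegVec G (S \ X))
    (hB.eigenvalues_mem_Icc
      (dotProduct_restrict_symLazy_mulVec_mem_Icc hdeg S))
    ⟨div_nonneg (cut_nonneg G S) hSpos.le, div_le_one_of_le₀ (cut_le_vol G S) hSpos.le⟩
    (by rw [hB.sum_sq_eigenvectorBasis_dotProduct, sqrtDegVec_dotProduct_self])
    (by linarith) (vol_mono G hXS) ?_ ?_ ?_ ?_ t
  · rw [hB.sum_eigenvalues_mul_sq_eigenvectorBasis_dotProduct,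
      dotProduct_restrict_symLazy_sqrtDegVec hdeg hXS]
    linarith [cut_le_vol G X]
  · simp only [← dotProduct_add, sqrtDegVec_add_sqrtDegVec_sdiff hXS]
    rw [hB.sum_sq_eigenvectorBasis_dotProduct, sqrtDegVec_dotProduct_self]
  · simp only [← dotProduct_add, sqrtDegVec_add_sqrtDegVec_sdiff hXS]
    rw [hB.sum_eigenvalues_mul_sq_eigenvectorBasis_dotProduct,
      dotProduct_restrict_symLazy_sqrtDegVec hdeg subset_rfl, div_mul_cancel₀ _ hSpos.ne']
  · rw [hB.sum_sq_eigenvectorBasis_dotProduct, sqrtDegVec_dotProduct_self, vol_sdiff G hXS]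
    linarith
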